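/- arXiv:1701.08188 — 6 statements merged into one kernel-verified Lean document; each statement's English description precedes it below -/
import Mathlib

section
/- Let x, y ∈ ℂ with y ≠ 1 and 1 − y + xy ≠ 0. Then T_m(T_e(x,y)) and T_e(T_{e+m}(T_m(x,y))) are both defined and equal, with common value (x/(1 − y + xy), y(1 − x)). This is the point-map form of the Kontsevich–Soibelman pentagon wall-crossing identity K_{γ_e} K_{γ_m} = K_{γ_m} K_{γ_e+γ_m} K_{γ_e} used at the wall of marginal stability (wall-crossing of type I). -/
open Complex

/-- Kontsevich–Soibelman point map `T_e(x,y) = (x, y(1-x))`. -/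
noncomputable def Te (p : ℂ × ℂ) : ℂ × ℂ := (p.1, p.2 * (1 - p.1))

/-- Kontsevich–Soibelman point map `T_m(x,y) = (x(1-y)⁻¹, y)`. -/
noncomputable def Tm (p : ℂ × ℂ) : ℂ × ℂ := (p.1 / (1 - p.2), p.2)

/-- Kontsevich–Soibelman point map `T_{e+m}(x,y) = (x(1+xy)⁻¹, y(1+xy))`. -/
noncomputable def Tem (p : ℂ × ℂ) : ℂ × ℂ := (p.1 / (1 + p.1 * p.2), p.2 * (1 + p.1 * p.2))

/-! Both sides have the common denominator `1 - y + xy`: it is the denominator created by `T_m`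
after `T_e`, and, up to the unit `1 - y`, the factor `1 + xy` that `T_{e+m}` sees after `T_m`.
Its identity `(1 - y + xy) - x = (1 - y)(1 - x)` then turns the last `T_e` into `y ↦ y(1 - x)`. -/

section PointMaps

variable (x y : ℂ)

theorem one_sub_Te_snd : 1 - (Te (x, y)).2 = 1 - y + x * y := by
  simp only [Te]
  ring

theorem one_add_Tm_fst_mul_snd (hy : y ≠ 1) :
    1 + (Tm (x, y)).1 * (Tm (x, y)).2 = (1 - y + x * y) / (1 - y) := by
  have : 1 - y ≠ 0 := sub_ne_zero.mpr hy.symm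
  simp only [Tm]
  field_simp

theorem Tm_Te : Tm (Te (x, y)) = (x / (1 - y + x * y), y * (1 - x)) := by
  rw [Tm, ← one_sub_Te_snd]
  rfl

theorem Tem_Tm (hy : y ≠ 1) :
    Tem (Tm (x, y)) = (x / (1 - y + x * y), y * (1 - y + x * y) / (1 - y)) := by
  have : 1 - y ≠ 0 := sub_ne_zero.mpr hy.symm
  rw [Tem, one_add_Tm_fst_mul_snd x y hy]
  simp only [Tm, Prod.mk.injEq]
  constructor
  · rw [div_div_div_cancel_right₀ this]
  · ring

theorem Te_Tem_Tm (hy : y ≠ 1) (h : 1 - y + x * y ≠ 0) :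
    Te (Tem (Tm (x, y))) = (x / (1 - y + x * y), y * (1 - x)) := by
  have : 1 - y ≠ 0 := sub_ne_zero.mpr hy.symm
  rw [Tem_Tm x y hy, Te, Prod.mk.injEq]
  refine ⟨rfl, ?_⟩
  have one_sub_x_div : 1 - x / (1 - y + x * y) = (1 - y) * (1 - x) / (1 - y + x * y) := by
    field_simp
    ring
  rw [one_sub_x_div]
  generalize 1 - y + x * y = D at h ⊢
  field_simp

end PointMaps

/-- Point-map form of the pentagon wall-crossing identity
`K_{γ_e} K_{γ_m} = K_{γ_m} K_{γ_e+γ_m} K_{γ_e}` (type I): for `y ≠ 1` and `1 - y + xy ≠ 0`,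
both `T_m(T_e(x,y))` and `T_e(T_{e+m}(T_m(x,y)))` are defined (all intermediate denominators
are nonzero) and equal, with common value `(x/(1 - y + xy), y(1-x))`. -/
theorem pentagon_wall_crossing_type_I (x y : ℂ) (hy : y ≠ 1) (h : 1 - y + x * y ≠ 0) :
    (1 - (Te (x, y)).2 ≠ 0) ∧
    (1 + (Tm (x, y)).1 * (Tm (x, y)).2 ≠ 0) ∧
    Tm (Te (x, y)) = (x / (1 - y + x * y), y * (1 - x)) ∧
    Te (Tem (Tm (x, y))) = (x / (1 - y + x * y), y * (1 - x)) := by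
  refine ⟨?_, ?_, Tm_Te x y, Te_Tem_Tm x y hy h⟩
  · rwa [one_sub_Te_snd]
  · rw [one_add_Tm_fst_mul_snd x y hy]
    exact div_ne_zero h (sub_ne_zero.mpr hy.symm)
end

section
/- Let x, y ∈ ℂ with x ≠ 0, x ≠ 1, y ≠ 1 and x + y ≠ 1. Then T_{−e}(T_m(x,y)) and T_m(T_{−e+m}(T_{−e}(x,y))) are both defined and equal, with common value (x/(1 − y), xy/(x + y − 1)). This is the point-map form of the second Kontsevich–Soibelman pentagon identity K_{−γ_e} K_{γ_m} = K_{γ_m} K_{−γ_e+γ_m} K_{−γ_e} (wall-crossing of type II). -/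
open Complex

/-- Kontsevich–Soibelman point map `T_{-e}(x,y) = (x, xy/(x-1))`. -/
noncomputable def Tme (p : ℂ × ℂ) : ℂ × ℂ := (p.1, p.1 * p.2 / (p.1 - 1))

/-- Kontsevich–Soibelman point map `T_{-e+m}(x,y) = (x²/(x+y), xy/(x+y))`. -/
noncomputable def Tmem (p : ℂ × ℂ) : ℂ × ℂ := (p.1 ^ 2 / (p.1 + p.2), p.1 * p.2 / (p.1 + p.2))

/-! Every composite is computed in closed form by clearing denominators. On both sides the
wall factor `x + y - 1` appears: on the left as `T_m(x,y)₁ - 1 = (x + y - 1)/(1 - y)`, on the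
right through `T_{-e}(x,y)₁ + T_{-e}(x,y)₂ = x(x + y - 1)/(x - 1)`, after which
`T_{-e+m}(T_{-e}(x,y)) = (x(x - 1), xy)/(x + y - 1)` and the last step `T_m` divides by
`1 - xy/(x + y - 1) = (x - 1)(1 - y)/(x + y - 1)`. -/

section PointMaps

variable {x y : ℂ}

lemma Tm_fst_sub_one (hy : y ≠ 1) : (Tm (x, y)).1 - 1 = (x + y - 1) / (1 - y) := by
  have : (1 : ℂ) - y ≠ 0 := sub_ne_zero.mpr hy.symm
  simp only [Tm]
  field_simp
  ring

lemma Tme_fst_add_snd (hx1 : x ≠ 1) :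
    (Tme (x, y)).1 + (Tme (x, y)).2 = x * (x + y - 1) / (x - 1) := by
  have : x - 1 ≠ 0 := sub_ne_zero.mpr hx1
  simp only [Tme]
  field_simp
  ring

lemma one_sub_div_wall (hxy : x + y ≠ 1) :
    1 - x * y / (x + y - 1) = (x - 1) * (1 - y) / (x + y - 1) := by
  have : x + y - 1 ≠ 0 := sub_ne_zero.mpr hxy
  field_simp
  ring

lemma Tme_Tm (hy : y ≠ 1) (hxy : x + y ≠ 1) :
    Tme (Tm (x, y)) = (x / (1 - y), x * y / (x + y - 1)) := by
  have : (1 : ℂ) - y ≠ 0 := sub_ne_zero.mpr hy.symm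
  have : x + y - 1 ≠ 0 := sub_ne_zero.mpr hxy
  have hden := Tm_fst_sub_one (x := x) hy
  simp only [Tm] at hden
  simp only [Tme, Tm, hden, Prod.mk.injEq, true_and]
  field_simp

lemma Tmem_Tme (hx1 : x ≠ 1) (hxy : x + y ≠ 1) :
    Tmem (Tme (x, y)) = (x * (x - 1) / (x + y - 1), x * y / (x + y - 1)) := by
  have : x - 1 ≠ 0 := sub_ne_zero.mpr hx1
  have : x + y - 1 ≠ 0 := sub_ne_zero.mpr hxy
  have hsum := Tme_fst_add_snd (y := y) hx1
  simp only [Tme] at hsum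
  simp only [Tmem, Tme, hsum, Prod.mk.injEq]
  constructor <;> field_simp

lemma Tm_Tmem_Tme (hx1 : x ≠ 1) (hy : y ≠ 1) (hxy : x + y ≠ 1) :
    Tm (Tmem (Tme (x, y))) = (x / (1 - y), x * y / (x + y - 1)) := by
  have : x - 1 ≠ 0 := sub_ne_zero.mpr hx1
  have : (1 : ℂ) - y ≠ 0 := sub_ne_zero.mpr hy.symm
  have : x + y - 1 ≠ 0 := sub_ne_zero.mpr hxy
  simp only [Tmem_Tme hx1 hxy, Tm, one_sub_div_wall hxy, Prod.mk.injEq, and_true]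
  field_simp

end PointMaps

/-- Point-map form of the second pentagon identity
`K_{-γ_e} K_{γ_m} = K_{γ_m} K_{-γ_e+γ_m} K_{-γ_e}` (wall-crossing of type II): for
`x ≠ 0`, `x ≠ 1`, `y ≠ 1` and `x + y ≠ 1`, both `T_{-e}(T_m(x,y))` and
`T_m(T_{-e+m}(T_{-e}(x,y)))` are defined (all intermediate denominators are nonzero)
and equal, with common value `(x/(1-y), xy/(x+y-1))`. -/
theorem pentagon_wall_crossing_type_II (x y : ℂ) (hx0 : x ≠ 0) (hx1 : x ≠ 1) (hy : y ≠ 1)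
    (hxy : x + y ≠ 1) :
    ((Tm (x, y)).1 - 1 ≠ 0) ∧
    ((Tme (x, y)).1 + (Tme (x, y)).2 ≠ 0) ∧
    (1 - (Tmem (Tme (x, y))).2 ≠ 0) ∧
    Tme (Tm (x, y)) = (x / (1 - y), x * y / (x + y - 1)) ∧
    Tm (Tmem (Tme (x, y))) = (x / (1 - y), x * y / (x + y - 1)) := by
  have h1x : x - 1 ≠ 0 := sub_ne_zero.mpr hx1
  have h1y : (1 : ℂ) - y ≠ 0 := sub_ne_zero.mpr hy.symm
  have hwall : x + y - 1 ≠ 0 := sub_ne_zero.mpr hxy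
  refine ⟨?_, ?_, ?_, Tme_Tm hy hxy, Tm_Tmem_Tme hx1 hy hxy⟩
  · rw [Tm_fst_sub_one hy]
    exact div_ne_zero hwall h1y
  · rw [Tme_fst_add_snd hx1]
    exact div_ne_zero (mul_ne_zero hx0 hwall) h1x
  · rw [Tmem_Tme hx1 hxy, one_sub_div_wall hxy]
    exact div_ne_zero (mul_ne_zero h1x h1y) hwall
end

section
/- Let R > 0, θ ∈ (0, 2π), b ∈ ℂ with |b| = 1, and ζ ∈ ℂ \ {0} with ζ/b ∉ ℝ. Then, as s → 0⁺, the quantity ∫₀^∞ (1/t)·((tb − ζ)/(tb + ζ))·Log(1 − e^{iθ} q_s(t)) dt − ∫₀^∞ (1/t)·((tb + ζ)/(tb − ζ))·Log(1 − e^{−iθ} q_s(t)) dt converges to 2·[Log(b/ζ)·Log(1 − e^{iθ}) − Log(−b/ζ)·Log(1 − e^{−iθ})]. (This is the limit of the Ooguri–Vafa magnetic correction integrals along the rays ℓ₊ = −ℝ₊b and ℓ₋ = ℝ₊b as the modulus |a| = s of the base coordinate a = sb tends to 0.) -/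
open Complex Filter MeasureTheory

/-!
With `w = ζ / b`, each correction integral is `∫₀^∞ r(t) Λ_s(t) dt` with
`r(t) = (1/t)(t - w)/(t + w)` and `Λ_s(t) = Log(1 - c q_s(t))`. Since `q_s(1/t) = q_s(t)`, the
substitution `t ↦ 1/t` lets us replace `r` by its symmetrisation
`K(t) = (r(t) + t⁻² r(1/t)) / 2 = (1 - w²) / ((t + w)(1 + t w))`, which, unlike `r`, is integrable
on `(0, ∞)`. As `s → 0⁺`, `Λ_s → Log(1 - c)` boundedly, so by dominated convergence the integral
tends to `Log(1 - c) ∫₀^∞ K`, and `∫₀^∞ K = -2 Log w` because `K` is the derivative of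
`φ(t) = Log(t + w) - Log(1 + t w)`, which satisfies `φ(1/t) = -φ(t)` and `φ(0) = Log w`.
-/

open Set
open scoped Topology

noncomputable section

namespace OoguriVafa

section Inversion

variable {E : Type*} [NormedAddCommGroup E] [NormedSpace ℝ E]

lemma abs_neg_one_mul_rpow_neg_two {t : ℝ} (ht : 0 < t) :
    |(-1 : ℝ)| * t ^ ((-1 : ℝ) - 1) = (t ^ 2)⁻¹ := by
  rw [show (-1 : ℝ) - 1 = -(2 : ℕ) by norm_num, Real.rpow_neg ht.le, Real.rpow_natCast]
  norm_num

lemma integrableOn_Ioi_comp_inv_iff (f : ℝ → E) :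
    IntegrableOn (fun t => (t ^ 2)⁻¹ • f t⁻¹) (Ioi 0) ↔ IntegrableOn f (Ioi 0) := by
  rw [← integrableOn_Ioi_comp_rpow_iff f (p := -1) (by norm_num)]
  refine integrableOn_congr_fun (fun t ht => ?_) measurableSet_Ioi
  rw [abs_neg_one_mul_rpow_neg_two ht, Real.rpow_neg_one]

lemma integral_Ioi_comp_inv [CompleteSpace E] (f : ℝ → E) :
    ∫ t in Ioi 0, (t ^ 2)⁻¹ • f t⁻¹ = ∫ t in Ioi 0, f t := by
  rw [← integral_comp_rpow_Ioi f (p := -1) (by norm_num)]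
  refine setIntegral_congr_fun measurableSet_Ioi (fun t ht => ?_)
  rw [abs_neg_one_mul_rpow_neg_two ht, Real.rpow_neg_one]

lemma integral_Ioi_add_comp_inv [CompleteSpace E] {f : ℝ → E} (hf : IntegrableOn f (Ioi 0)) :
    ∫ t in Ioi 0, (f t + (t ^ 2)⁻¹ • f t⁻¹) = (2 : ℝ) • ∫ t in Ioi 0, f t := by
  rw [integral_add hf ((integrableOn_Ioi_comp_inv_iff f).2 hf), integral_Ioi_comp_inv, two_smul]

end Inversion

section Kernel

variable {w : ℂ}

def kernel (w : ℂ) (t : ℝ) : ℂ := (1 - w ^ 2) / ((t + w) * (1 + t * w))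

def kernelPrimitive (w : ℂ) (t : ℝ) : ℂ := log (t + w) - log (1 + t * w)

def ratio (w : ℂ) (t : ℝ) : ℂ := 1 / (t : ℂ) * ((t - w) / (t + w))

lemma ofReal_add_mem_slitPlane (hw : w.im ≠ 0) (t : ℝ) : (t + w : ℂ) ∈ slitPlane :=
  Or.inr (by simpa using hw)

lemma one_add_ofReal_mul_mem_slitPlane (hw : w.im ≠ 0) (t : ℝ) :
    (1 + t * w : ℂ) ∈ slitPlane := by
  rcases eq_or_ne t 0 with rfl | ht
  · simp
  · exact Or.inr (by simpa using And.intro ht hw)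

lemma im_sq_mul_le_normSq (w : ℂ) (a b : ℝ) :
    w.im ^ 2 * (a ^ 2 + b ^ 2) ≤ (1 + normSq w) * normSq (a + b * w) := by
  simp only [normSq_apply, add_re, add_im, mul_re, mul_im, ofReal_re, ofReal_im]
  nlinarith [sq_nonneg (a + b * w.re), sq_nonneg (w.re * (a + b * w.re) + b * w.im ^ 2)]

lemma norm_kernel_le (hw : w.im ≠ 0) (t : ℝ) :
    ‖kernel w t‖ ≤ ‖1 - w ^ 2‖ * (1 + normSq w) / w.im ^ 2 * (1 + t ^ 2)⁻¹ := by
  have hN : 0 < 1 + normSq w := by linarith [normSq_nonneg w]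
  set m := w.im ^ 2 * (1 + t ^ 2) / (1 + normSq w) with hm_def
  have hm : 0 < m := by positivity
  have h₁ : m ≤ normSq (t + w) := by
    rw [div_le_iff₀' hN]
    simpa [add_comm] using im_sq_mul_le_normSq w t 1
  have h₂ : m ≤ normSq (1 + t * w) := by
    rw [div_le_iff₀' hN]
    simpa using im_sq_mul_le_normSq w 1 t
  have hden : m ≤ ‖((t : ℂ) + w) * (1 + t * w)‖ := by
    rw [← pow_le_pow_iff_left₀ hm.le (norm_nonneg _) two_ne_zero, Complex.sq_norm, normSq_mul, sq]
    exact mul_le_mul h₁ h₂ hm.le (normSq_nonneg _)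
  rw [kernel, norm_div]
  calc ‖1 - w ^ 2‖ / ‖((t : ℂ) + w) * (1 + t * w)‖ ≤ ‖1 - w ^ 2‖ / m := by gcongr
    _ = _ := by rw [hm_def]; field_simp

lemma continuous_kernel (hw : w.im ≠ 0) : Continuous (kernel w) :=
  continuous_const.div (by fun_prop) fun t =>
    mul_ne_zero (slitPlane_ne_zero (ofReal_add_mem_slitPlane hw t))
      (slitPlane_ne_zero (one_add_ofReal_mul_mem_slitPlane hw t))

lemma integrable_kernel (hw : w.im ≠ 0) : Integrable (kernel w) :=
  (integrable_inv_one_add_sq.const_mul _).mono' (continuous_kernel hw).aestronglyMeasurable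
    (ae_of_all _ (norm_kernel_le hw))

lemma hasDerivAt_kernelPrimitive (hw : w.im ≠ 0) (t : ℝ) :
    HasDerivAt (kernelPrimitive w) (kernel w t) t := by
  have h₁ := ofReal_add_mem_slitPlane hw t
  have h₂ := one_add_ofReal_mul_mem_slitPlane hw t
  have hid : HasDerivAt (fun u : ℝ => (u : ℂ)) 1 t := (hasDerivAt_id t).ofReal_comp
  have d₁ := (hid.add_const w).clog_real h₁
  have d₂ := ((hid.mul_const w).const_add 1).clog_real h₂
  refine (d₁.sub d₂).congr_deriv ?_
  -- partial fractions: `(1 - w²) / ((t + w)(1 + t w)) = 1 / (t + w) - w / (1 + t w)`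
  have := slitPlane_ne_zero h₁
  have := slitPlane_ne_zero h₂
  rw [kernel]
  field_simp
  ring

lemma continuous_kernelPrimitive (hw : w.im ≠ 0) : Continuous (kernelPrimitive w) :=
  continuous_iff_continuousAt.2 fun t => (hasDerivAt_kernelPrimitive hw t).continuousAt

lemma kernelPrimitive_inv (hw : w.im ≠ 0) {t : ℝ} (ht : 0 < t) :
    kernelPrimitive w t⁻¹ = -kernelPrimitive w t := by
  have htC : (t : ℂ) ≠ 0 := ofReal_ne_zero.2 ht.ne'
  have e₁ : ((t⁻¹ : ℝ) : ℂ) + w = (t⁻¹ : ℝ) * (1 + t * w) := by push_cast; field_simp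
  have e₂ : 1 + ((t⁻¹ : ℝ) : ℂ) * w = (t⁻¹ : ℝ) * (t + w) := by push_cast; field_simp
  rw [kernelPrimitive, kernelPrimitive, e₁, e₂,
    log_ofReal_mul (inv_pos.2 ht) (slitPlane_ne_zero (one_add_ofReal_mul_mem_slitPlane hw t)),
    log_ofReal_mul (inv_pos.2 ht) (slitPlane_ne_zero (ofReal_add_mem_slitPlane hw t))]
  ring

lemma tendsto_kernelPrimitive_atTop (hw : w.im ≠ 0) :
    Tendsto (kernelPrimitive w) atTop (𝓝 (-log w)) := by
  have h₀ : kernelPrimitive w 0 = log w := by simp [kernelPrimitive]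
  have hinv : Tendsto (fun t => -kernelPrimitive w t⁻¹) atTop (𝓝 (-log w)) :=
    (h₀ ▸ ((continuous_kernelPrimitive hw).tendsto 0).comp tendsto_inv_atTop_zero).neg
  refine hinv.congr' ?_
  filter_upwards [eventually_gt_atTop 0] with t ht
  rw [kernelPrimitive_inv hw ht, neg_neg]

lemma integral_kernel (hw : w.im ≠ 0) : ∫ t in Ioi 0, kernel w t = -2 * log w := by
  rw [integral_Ioi_of_hasDerivAt_of_tendsto (continuous_kernelPrimitive hw).continuousWithinAt
    (fun t _ => hasDerivAt_kernelPrimitive hw t) (integrable_kernel hw).integrableOn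
    (tendsto_kernelPrimitive_atTop hw)]
  simp [kernelPrimitive]
  ring

lemma ratio_add_inv_sq_mul_ratio_inv (hw : w.im ≠ 0) {t : ℝ} (ht : t ≠ 0) :
    ratio w t + ((t ^ 2)⁻¹ : ℝ) * ratio w t⁻¹ = 2 * kernel w t := by
  have h₁ := slitPlane_ne_zero (ofReal_add_mem_slitPlane hw t)
  have h₂ := slitPlane_ne_zero (one_add_ofReal_mul_mem_slitPlane hw t)
  have htC : (t : ℂ) ≠ 0 := ofReal_ne_zero.2 ht
  have h₃ : (t : ℂ)⁻¹ + w ≠ 0 := by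
    rw [← ofReal_inv]; exact slitPlane_ne_zero (ofReal_add_mem_slitPlane hw _)
  simp only [ratio, kernel, ofReal_inv, ofReal_pow]
  field_simp
  ring

end Kernel

section Weight

def weight (R s t : ℝ) : ℝ := Real.exp (-Real.pi * R * s * (t + 1 / t))

variable {R s t : ℝ}

lemma weight_le_one (hR : 0 ≤ R) (hs : 0 ≤ s) (ht : 0 < t) : weight R s t ≤ 1 := by
  rw [weight, Real.exp_le_one_iff, neg_mul, neg_mul, neg_mul, neg_nonpos]
  have := Real.pi_pos
  positivity

lemma weight_inv (R s t : ℝ) : weight R s t⁻¹ = weight R s t := by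
  rw [weight, weight, one_div, inv_inv, add_comm, one_div]

lemma tendsto_weight_zero (R t : ℝ) : Tendsto (fun s => weight R s t) (𝓝 0) (𝓝 1) :=
  (by unfold weight; fun_prop : Continuous fun s => weight R s t).tendsto' 0 1 (by simp [weight])

lemma inv_mul_weight_le (hR : 0 < R) (hs : 0 < s) (ht : 0 < t) :
    t⁻¹ * weight R s t ≤ (Real.pi * R * s)⁻¹ * Real.exp (-(Real.pi * R * s) * t) := by
  set a := Real.pi * R * s
  have ha : 0 < a := by have := Real.pi_pos; positivity
  have hsplit : weight R s t = Real.exp (-a * t) * Real.exp (-(a / t)) := by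
    rw [weight, ← Real.exp_add]; congr 1; ring
  have hx : a / t * Real.exp (-(a / t)) ≤ 1 := by
    rw [Real.exp_neg, ← div_eq_mul_inv, div_le_one (Real.exp_pos _)]
    linarith [Real.add_one_le_exp (a / t)]
  rw [hsplit]
  calc t⁻¹ * (Real.exp (-a * t) * Real.exp (-(a / t)))
      = a⁻¹ * (a / t * Real.exp (-(a / t))) * Real.exp (-a * t) := by field_simp
    _ ≤ a⁻¹ * 1 * Real.exp (-a * t) := by gcongr
    _ = a⁻¹ * Real.exp (-a * t) := by ring

end Weight

section LogBound

lemma norm_log_le_of_le_re {δ : ℝ} {z : ℂ} (hδ : 0 < δ) (hδ₁ : δ ≤ 1) (hz : δ ≤ z.re) :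
    ‖log z‖ ≤ δ⁻¹ * ‖z - 1‖ := by
  have hmem : ∀ u ∈ {u : ℂ | δ ≤ u.re}, u ∈ slitPlane := fun u hu => Or.inl (hδ.trans_le hu)
  have hderiv : ∀ u ∈ {u : ℂ | δ ≤ u.re}, HasDerivWithinAt log u⁻¹ {u : ℂ | δ ≤ u.re} u :=
    fun u hu => (hasDerivAt_log (hmem u hu)).hasDerivWithinAt
  have hbound : ∀ u ∈ {u : ℂ | δ ≤ u.re}, ‖u⁻¹‖ ≤ δ⁻¹ := fun u hu => by
    rw [norm_inv]
    exact inv_anti₀ hδ ((show δ ≤ u.re from hu).trans (re_le_norm u))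
  simpa using (convex_halfSpace_re_ge δ).norm_image_sub_le_of_norm_hasDerivWithin_le hderiv
    hbound (show (1 : ℂ) ∈ {u : ℂ | δ ≤ u.re} by simpa using hδ₁) hz

lemma exists_norm_log_one_sub_mul_le {c : ℂ} (hc : c.re < 1) :
    ∃ C, 0 ≤ C ∧ ∀ q ∈ Icc (0 : ℝ) 1, ‖log (1 - c * q)‖ ≤ C * q := by
  set δ := min 1 (1 - c.re)
  have hδ : 0 < δ := lt_min one_pos (sub_pos.2 hc)
  refine ⟨δ⁻¹ * ‖c‖, by positivity, fun q ⟨hq₀, hq₁⟩ => ?_⟩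
  -- `re (1 - c q)` is affine in `q`, so it is bounded below by its values at `q = 0, 1`
  have hre : δ ≤ (1 - c * q).re := by
    simp only [sub_re, one_re, re_mul_ofReal]
    rcases le_total c.re 0 with h | h
    · exact (min_le_left _ _).trans (by nlinarith)
    · exact (min_le_right _ _).trans (by nlinarith)
  calc ‖log (1 - c * q)‖ ≤ δ⁻¹ * ‖1 - c * q - 1‖ := norm_log_le_of_le_re hδ (min_le_left _ _) hre
    _ = δ⁻¹ * ‖c‖ * q := by
      rw [sub_sub_cancel_left, norm_neg, norm_mul, norm_real, Real.norm_of_nonneg hq₀, mul_assoc]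

end LogBound

section Limit

variable {R : ℝ} {c w : ℂ}

lemma measurable_log_one_sub_mul_weight (c : ℂ) (R s : ℝ) :
    Measurable fun t => log (1 - c * weight R s t) := by
  unfold weight; fun_prop

lemma norm_ofReal_sub_div_ofReal_add_le (hw : w.im ≠ 0) (t : ℝ) :
    ‖((t : ℂ) - w) / (t + w)‖ ≤ 1 + 2 * ‖w‖ / |w.im| := by
  have hne := slitPlane_ne_zero (ofReal_add_mem_slitPlane hw t)
  have him : |w.im| ≤ ‖(t : ℂ) + w‖ := by simpa using abs_im_le_norm ((t : ℂ) + w)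
  calc ‖((t : ℂ) - w) / (t + w)‖ = ‖1 - 2 * w / (t + w)‖ := by congr 1; field_simp; ring
    _ ≤ 1 + 2 * ‖w‖ / ‖(t : ℂ) + w‖ := by
      refine (norm_sub_le _ _).trans_eq ?_
      rw [norm_one, norm_div, norm_mul, Complex.norm_two]
    _ ≤ 1 + 2 * ‖w‖ / |w.im| := by gcongr

lemma integrableOn_inv_mul_mul_log_weight (hR : 0 < R) {s : ℝ} (hs : 0 < s) (hc : c.re < 1)
    {g : ℝ → ℂ} {A : ℝ} (hg : AEStronglyMeasurable g (volume.restrict (Ioi 0)))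
    (hgA : ∀ t ∈ Ioi (0 : ℝ), ‖g t‖ ≤ A) :
    IntegrableOn (fun t : ℝ => 1 / (t : ℂ) * g t * log (1 - c * weight R s t)) (Ioi 0) := by
  obtain ⟨C, hC₀, hC⟩ := exists_norm_log_one_sub_mul_le hc
  have ha : 0 < Real.pi * R * s := by have := Real.pi_pos; positivity
  refine ((exp_neg_integrableOn_Ioi 0 ha).const_mul (A * C * (Real.pi * R * s)⁻¹)).mono'
    (((measurable_const.div measurable_ofReal).aestronglyMeasurable.mul hg).mul
      (measurable_log_one_sub_mul_weight c R s).aestronglyMeasurable)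
    ((ae_restrict_iff' measurableSet_Ioi).2 (ae_of_all _ fun t (ht : 0 < t) => ?_))
  have hA : 0 ≤ A := (norm_nonneg _).trans (hgA t ht)
  have hq := weight_le_one hR.le hs.le ht
  calc ‖1 / (t : ℂ) * g t * log (1 - c * weight R s t)‖
      = t⁻¹ * ‖g t‖ * ‖log (1 - c * weight R s t)‖ := by
        rw [norm_mul, norm_mul, norm_div, norm_one, norm_real, Real.norm_of_nonneg ht.le, one_div]
    _ ≤ t⁻¹ * A * (C * weight R s t) := by
        gcongr
        exacts [hgA t ht, hC _ ⟨(Real.exp_pos _).le, hq⟩]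
    _ = A * C * (t⁻¹ * weight R s t) := by ring
    _ ≤ A * C * ((Real.pi * R * s)⁻¹ * Real.exp (-(Real.pi * R * s) * t)) := by
        exact mul_le_mul_of_nonneg_left (inv_mul_weight_le hR hs ht) (by positivity)
    _ = _ := by ring

lemma integral_ratio_mul_log_weight (hR : 0 < R) {s : ℝ} (hs : 0 < s) (hw : w.im ≠ 0)
    (hc : c.re < 1) :
    ∫ t in Ioi 0, ratio w t * log (1 - c * weight R s t) =
      ∫ t in Ioi 0, kernel w t * log (1 - c * weight R s t) := by
  have hf : IntegrableOn (fun t => ratio w t * log (1 - c * weight R s t)) (Ioi 0) :=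
    integrableOn_inv_mul_mul_log_weight hR hs hc
      (by fun_prop : Measurable fun t : ℝ => ((t : ℂ) - w) / (t + w)).aestronglyMeasurable
      fun t _ => norm_ofReal_sub_div_ofReal_add_le hw t
  have hsum : ∀ t ∈ Ioi (0 : ℝ), ratio w t * log (1 - c * weight R s t) +
      (t ^ 2)⁻¹ • (ratio w t⁻¹ * log (1 - c * weight R s t⁻¹)) =
        2 * (kernel w t * log (1 - c * weight R s t)) := fun t (ht : 0 < t) => by
    rw [weight_inv, real_smul]
    linear_combination log (1 - c * weight R s t) * ratio_add_inv_sq_mul_ratio_inv hw ht.ne'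
  have h := integral_Ioi_add_comp_inv hf
  rw [setIntegral_congr_fun measurableSet_Ioi hsum, integral_const_mul, two_smul, two_mul] at h
  linear_combination -h / 2

theorem tendsto_integral_mul_log_weight {k : ℝ → ℂ} (hk : IntegrableOn k (Ioi 0)) (hR : 0 ≤ R)
    (hc : c.re < 1) :
    Tendsto (fun s => ∫ t in Ioi 0, k t * log (1 - c * weight R s t)) (𝓝[>] 0)
      (𝓝 ((∫ t in Ioi 0, k t) * log (1 - c))) := by
  obtain ⟨C, hC₀, hC⟩ := exists_norm_log_one_sub_mul_le hc
  rw [← integral_mul_const]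
  refine tendsto_integral_filter_of_dominated_convergence (fun t => ‖k t‖ * C)
    (Eventually.of_forall fun s => hk.aestronglyMeasurable.mul
      (measurable_log_one_sub_mul_weight c R s).aestronglyMeasurable) ?_
    (hk.norm.mul_const C) (ae_of_all _ fun t => ?_)
  · filter_upwards [self_mem_nhdsWithin] with s (hs : 0 < s)
    refine (ae_restrict_iff' measurableSet_Ioi).2 (ae_of_all _ fun t (ht : 0 < t) => ?_)
    have hq := weight_le_one hR hs.le ht
    rw [norm_mul]
    gcongr
    exact (hC _ ⟨(Real.exp_pos _).le, hq⟩).trans (mul_le_of_le_one_right hC₀ hq)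
  · have hslit : 1 - c ∈ slitPlane := Or.inl (by simpa using hc)
    have hq : Tendsto (fun s => 1 - c * weight R s t) (𝓝[>] 0) (𝓝 (1 - c)) := by
      simpa using (((continuous_ofReal.tendsto 1).comp
        ((tendsto_weight_zero R t).mono_left nhdsWithin_le_nhds)).const_mul c).const_sub 1
    exact ((continuousAt_clog hslit).tendsto.comp hq).const_mul (k t)

theorem tendsto_integral_ratio_mul_log_weight (hR : 0 < R) (hw : w.im ≠ 0) (hc : c.re < 1) :
    Tendsto (fun s => ∫ t in Ioi 0, ratio w t * log (1 - c * weight R s t)) (𝓝[>] 0)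
      (𝓝 (-2 * log w * log (1 - c))) := by
  rw [← integral_kernel hw]
  refine (tendsto_integral_mul_log_weight (integrable_kernel hw).integrableOn hR.le hc).congr' ?_
  filter_upwards [self_mem_nhdsWithin] with s hs
  exact (integral_ratio_mul_log_weight hR hs hw hc).symm

end Limit

lemma log_inv_of_im_ne_zero {z : ℂ} (hz : z.im ≠ 0) : log z⁻¹ = -log z :=
  log_inv z fun h => hz (arg_eq_pi_iff.1 h).2

lemma re_exp_mul_I_lt_one {θ : ℝ} (hθ : θ ∈ Ioo 0 (2 * Real.pi)) : (exp (θ * I)).re < 1 := by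
  rw [exp_ofReal_mul_I_re]
  exact (Real.cos_le_one θ).lt_of_ne fun h => hθ.1.ne'
    ((Real.cos_eq_one_iff_of_lt_of_lt (by linarith [hθ.1, Real.pi_pos]) hθ.2).1 h)

end OoguriVafa

end

theorem ov_correction_integral_limit_general (R θ : ℝ) (b ζ : ℂ) (hR : 0 < R)
    (hθ : θ ∈ Set.Ioo 0 (2 * Real.pi))
    (hζb : ¬ ∃ r : ℝ, (r : ℂ) = ζ / b) :
    Tendsto (fun s : ℝ =>
        (∫ t in Set.Ioi (0:ℝ), (1 / (t : ℂ)) * (((t : ℂ) * b - ζ) / ((t : ℂ) * b + ζ)) *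
          Complex.log (1 - Complex.exp ((θ : ℂ) * I) *
            (Real.exp (-Real.pi * R * s * (t + 1 / t)) : ℂ))) -
        (∫ t in Set.Ioi (0:ℝ), (1 / (t : ℂ)) * (((t : ℂ) * b + ζ) / ((t : ℂ) * b - ζ)) *
          Complex.log (1 - Complex.exp (-(θ : ℂ) * I) *
            (Real.exp (-Real.pi * R * s * (t + 1 / t)) : ℂ))))
      (nhdsWithin 0 (Set.Ioi 0))
      (nhds (2 * (Complex.log (b / ζ) * Complex.log (1 - Complex.exp ((θ : ℂ) * I)) -
        Complex.log (-b / ζ) * Complex.log (1 - Complex.exp (-(θ : ℂ) * I))))) := by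
  have hb : b ≠ 0 := by rintro rfl; exact hζb ⟨0, by simp⟩
  have hw : (ζ / b).im ≠ 0 := fun h => hζb ⟨(ζ / b).re, by apply Complex.ext <;> simp [h]⟩
  have hc₁ := OoguriVafa.re_exp_mul_I_lt_one hθ
  have hc₂ : (exp (-θ * I)).re < 1 := by
    rw [← ofReal_neg, exp_ofReal_mul_I_re, Real.cos_neg, ← exp_ofReal_mul_I_re]; exact hc₁
  have hr₁ : ∀ t : ℝ, ((t : ℂ) * b - ζ) / (t * b + ζ) = (t - ζ / b) / (t + ζ / b) :=
    fun t => by field_simp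
  have hr₂ : ∀ t : ℝ, ((t : ℂ) * b + ζ) / (t * b - ζ) = (t - -(ζ / b)) / (t + -(ζ / b)) :=
    fun t => by field_simp; ring
  have hlim : 2 * (log (b / ζ) * log (1 - exp (θ * I)) - log (-b / ζ) * log (1 - exp (-θ * I))) =
      -2 * log (ζ / b) * log (1 - exp (θ * I)) -
        -2 * log (-(ζ / b)) * log (1 - exp (-θ * I)) := by
    rw [← inv_div ζ b, OoguriVafa.log_inv_of_im_ne_zero hw, neg_div, ← inv_div ζ b, ← inv_neg,
      OoguriVafa.log_inv_of_im_ne_zero (by simpa using hw)]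
    ring
  have h₂ := OoguriVafa.tendsto_integral_ratio_mul_log_weight hR (w := -(ζ / b))
    (by simpa using hw) hc₂
  rw [hlim]
  convert (OoguriVafa.tendsto_integral_ratio_mul_log_weight hR hw hc₁).sub h₂ using 5 with s t t
  · rw [OoguriVafa.ratio, hr₁]; rfl
  · rw [OoguriVafa.ratio, hr₂]; rfl

/-- The limit of the Ooguri–Vafa magnetic correction integrals along the rays
`ℓ₊ = -ℝ₊b` and `ℓ₋ = ℝ₊b` as `s = |a| → 0⁺`: for `R > 0`, `θ ∈ (0, 2π)`, `|b| = 1`,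
`ζ ≠ 0` with `ζ/b ∉ ℝ`, the difference of the two correction integrals converges to
`2·[Log(b/ζ)·Log(1 - e^{iθ}) - Log(-b/ζ)·Log(1 - e^{-iθ})]`. -/
theorem ov_correction_integral_limit (R θ : ℝ) (b ζ : ℂ) (hR : 0 < R)
    (hθ : θ ∈ Set.Ioo 0 (2 * Real.pi)) (hb : ‖b‖ = 1) (hζ : ζ ≠ 0)
    (hζb : ¬ ∃ r : ℝ, (r : ℂ) = ζ / b) :
    Tendsto (fun s : ℝ =>
        (∫ t in Set.Ioi (0:ℝ), (1 / (t : ℂ)) * (((t : ℂ) * b - ζ) / ((t : ℂ) * b + ζ)) *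
          Complex.log (1 - Complex.exp ((θ : ℂ) * I) *
            (Real.exp (-Real.pi * R * s * (t + 1 / t)) : ℂ))) -
        (∫ t in Set.Ioi (0:ℝ), (1 / (t : ℂ)) * (((t : ℂ) * b + ζ) / ((t : ℂ) * b - ζ)) *
          Complex.log (1 - Complex.exp (-(θ : ℂ) * I) *
            (Real.exp (-Real.pi * R * s * (t + 1 / t)) : ℂ))))
      (nhdsWithin 0 (Set.Ioi 0))
      (nhds (2 * (Complex.log (b / ζ) * Complex.log (1 - Complex.exp ((θ : ℂ) * I)) -
        Complex.log (-b / ζ) * Complex.log (1 - Complex.exp (-(θ : ℂ) * I))))) :=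
  ov_correction_integral_limit_general R θ b ζ hR hθ hζb
end

section
/- Let θ_e ∈ (0, 2π), θ_m ∈ ℝ, φ ∈ (−π, π], b = e^{iφ}, and let ζ ∈ ℂ satisfy Im ζ > 0 and Im(b/ζ) < 0. Then exp( iθ_m + (i/2π)[ Log(b/ζ)·Log(1 − e^{iθ_e}) − Log(−b/ζ)·Log(1 − e^{−iθ_e}) ] ) = exp( iθ'_m + ((θ_e − π)/2π)·Log ζ + (1/2)·Log(1 − e^{−iθ_e}) ), where θ'_m := θ_m − (θ_e − π)φ/(2π). (This is the closed-form region-I formula for the extended magnetic coordinate of the Ooguri–Vafa space at the singular fiber, after the gauge transformation θ_m ↦ θ'_m.) -/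
/-!
Every logarithm on the left has a closed form. Writing `1 - e^{iθ} = 2 sin(θ/2) e^{i(θ-π)/2}`
gives `Log(1 - e^{±iθ_e}) = log(2 sin(θ_e/2)) ± i(θ_e - π)/2`. In region I the branch of
`Log(b/ζ)` is pinned down: `Im(iφ - Log ζ) = φ - arg ζ` lies in `(-2π, π]`, and it cannot lie in
`(-2π, -π]` because `b/ζ` is in the lower half plane; hence `Log(b/ζ) = iφ - Log ζ`, and
`Log(-b/ζ) = Log(b/ζ) + iπ`. After these substitutions the two exponents agree on the nose,
not merely modulo `2πi`.
-/

open Complex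
open scoped Real

namespace Complex

theorem one_sub_exp_mul_I (θ : ℂ) :
    1 - exp (θ * I) = 2 * sin (θ / 2) * exp ((θ - π) / 2 * I) := by
  have hsq : exp (θ * I) = exp (θ / 2 * I) ^ 2 := by rw [← exp_nat_mul]; ring_nf
  have hinv : exp (-(θ / 2 * I)) * exp (θ / 2 * I) = 1 := by rw [← exp_add]; simp
  have hshift : exp ((θ - π) / 2 * I) = -I * exp (θ / 2 * I) := by
    rw [show (θ - π) / 2 * I = θ / 2 * I + -(π / 2 * I) by ring, exp_add, exp_neg,
      exp_pi_div_two_mul_I, inv_I, mul_comm]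
  rw [hsq, hshift, sin, show -(θ / 2) * I = -(θ / 2 * I) by ring]
  linear_combination (-1 : ℂ) * hinv +
    (exp (-(θ / 2 * I)) * exp (θ / 2 * I) - exp (θ / 2 * I) ^ 2) * I_sq

theorem log_one_sub_exp_mul_I {θ : ℝ} (h₀ : 0 < θ) (h₂π : θ < 2 * π) :
    log (1 - exp (θ * I)) = Real.log (2 * Real.sin (θ / 2)) + ((θ - π) / 2 : ℝ) * I := by
  have hsin : 0 < 2 * Real.sin (θ / 2) := by
    have := Real.sin_pos_of_pos_of_lt_pi (x := θ / 2) (by linarith) (by linarith)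
    linarith
  have hexp : log (exp (((θ - π) / 2 : ℝ) * I)) = ((θ - π) / 2 : ℝ) * I := by
    apply log_exp <;> simp <;> linarith [Real.pi_pos]
  rw [one_sub_exp_mul_I, ← hexp]
  exact_mod_cast log_ofReal_mul hsin (exp_ne_zero _)

theorem log_one_sub_exp_neg_mul_I {θ : ℝ} (h₀ : 0 < θ) (h₂π : θ < 2 * π) :
    log (1 - exp (-θ * I)) = Real.log (2 * Real.sin (θ / 2)) + ((π - θ) / 2 : ℝ) * I := by
  have hperiod : exp (-θ * I) = exp ((2 * π - θ : ℝ) * I) := by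
    rw [show ((2 * π - θ : ℝ) : ℂ) * I = -θ * I + 2 * π * I by push_cast; ring,
      exp_add, exp_two_pi_mul_I, mul_one]
  rw [hperiod, log_one_sub_exp_mul_I (by linarith) (by linarith),
    show (2 * π - θ) / 2 = π - θ / 2 by ring, Real.sin_pi_sub]
  congr 3
  ring

theorem log_neg_of_im_neg {z : ℂ} (hz : z.im < 0) : log (-z) = log z + π * I := by
  apply Complex.ext <;> simp [log_re, log_im, arg_neg_eq_arg_add_pi_of_im_neg hz]

theorem log_exp_of_exp_im_neg {w : ℂ} (hlo : -(2 * π) < w.im) (hhi : w.im ≤ π)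
    (hneg : (exp w).im < 0) : log (exp w) = w := by
  refine log_exp (not_le.1 fun hle => hneg.not_ge ?_) hhi
  have : 0 ≤ Real.sin w.im := by
    rw [← Real.sin_add_two_pi]
    exact Real.sin_nonneg_of_nonneg_of_le_pi (by linarith) (by linarith)
  rw [exp_im]
  positivity

theorem log_exp_mul_I_div {φ : ℝ} {ζ : ℂ} (hφ : φ ∈ Set.Ioc (-π) π) (hζ : 0 < ζ.im)
    (hneg : (exp (φ * I) / ζ).im < 0) : log (exp (φ * I) / ζ) = φ * I - log ζ := by
  have hζ₀ : ζ ≠ 0 := fun h => by simp [h] at hζ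
  have hdiv : exp (φ * I) / ζ = exp (φ * I - log ζ) := by rw [exp_sub, exp_log hζ₀]
  have him : (φ * I - log ζ).im = φ - arg ζ := by simp [log_im]
  have harg : 0 ≤ arg ζ := arg_nonneg_iff.2 hζ.le
  rw [hdiv] at hneg ⊢
  exact log_exp_of_exp_im_neg (by linarith [hφ.1, arg_le_pi ζ]) (by linarith [hφ.2]) hneg

end Complex

/-- Closed-form region-I formula for the extended magnetic coordinate of the Ooguri–Vafa
space at the singular fiber, after the gauge transformation
`θ'_m = θ_m - (θ_e - π)φ/(2π)`: for `θ_e ∈ (0, 2π)`, `θ_m ∈ ℝ`, `φ ∈ (-π, π]`,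
`b = e^{iφ}`, and `ζ` with `Im ζ > 0` and `Im(b/ζ) < 0`,
`exp(iθ_m + (i/2π)[Log(b/ζ)Log(1-e^{iθ_e}) - Log(-b/ζ)Log(1-e^{-iθ_e})])
  = exp(iθ'_m + ((θ_e-π)/2π)Log ζ + (1/2)Log(1-e^{-iθ_e}))`. -/
theorem ov_region_I_formula (θe θm φ : ℝ) (ζ : ℂ)
    (hθe : θe ∈ Set.Ioo 0 (2 * Real.pi)) (hφ : φ ∈ Set.Ioc (-Real.pi) Real.pi)
    (hζ : 0 < ζ.im) (hbζ : (Complex.exp ((φ : ℂ) * I) / ζ).im < 0) :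
    Complex.exp ((θm : ℂ) * I + (I / (2 * (Real.pi : ℂ))) *
        (Complex.log (Complex.exp ((φ : ℂ) * I) / ζ) *
            Complex.log (1 - Complex.exp ((θe : ℂ) * I)) -
          Complex.log (-Complex.exp ((φ : ℂ) * I) / ζ) *
            Complex.log (1 - Complex.exp (-(θe : ℂ) * I)))) =
    Complex.exp (((θm - (θe - Real.pi) * φ / (2 * Real.pi) : ℝ) : ℂ) * I +
        (((θe : ℂ) - (Real.pi : ℂ)) / (2 * (Real.pi : ℂ))) * Complex.log ζ +
        (1 / 2) * Complex.log (1 - Complex.exp (-(θe : ℂ) * I))) := by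
  rw [neg_div, log_neg_of_im_neg hbζ, log_exp_mul_I_div hφ hζ hbζ,
    log_one_sub_exp_mul_I hθe.1 hθe.2, log_one_sub_exp_neg_mul_I hθe.1 hθe.2]
  congr 1
  have hπ : (π : ℂ) ≠ 0 := ofReal_ne_zero.2 Real.pi_ne_zero
  push_cast
  field_simp
  linear_combination
    (2 * (I * φ - log ζ) * (θe - π) - 2 * π * Real.log (2 * Real.sin (θe / 2))
      - I * π * (π - θe)) * I_sq
end

section
/- Let w ∈ ℂ with Im w > 0 and θ ∈ (0, 2π). Then (i/2π)[ Log(w)·Log(1 − e^{iθ}) − Log(−w)·Log(1 − e^{−iθ}) ] + Log(1 − e^{iθ}) = −((θ − π)/2π)·Log(w) + (1/2)·Log(1 − e^{−iθ}) + i(θ − π). (This is the region-III identity in the proof that the extended magnetic coordinate of the Ooguri–Vafa space is continuous across the cut; the extra term i(θ − π) is exactly compensated by the 2πi discontinuity of Log(a/ζ) = Log a − Log ζ + 2πi valid in region III.) -/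
/-! For `θ ∈ (0, 2π)` both `1 - e^{±iθ}` lie in the right half-plane, with principal logarithms
`log (2 sin (θ/2)) ± i(θ - π)/2`, and `Im w > 0` gives `Log(-w) = Log w - iπ`. After these
substitutions the identity is polynomial algebra using only `i² = -1`. -/

open Complex

/-- `1 - e^{iθ} = -2i sin(θ/2) e^{iθ/2} = 2 sin(θ/2) e^{i(θ-π)/2}`, and for `θ ∈ (0, 2π)` this is
the polar form with positive modulus and argument in `(-π/2, π/2)`. -/
theorem log_one_sub_exp_mul_I {θ : ℝ} (hθ : θ ∈ Set.Ioo 0 (2 * Real.pi)) :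
    log (1 - exp (θ * I)) = Real.log (2 * Real.sin (θ / 2)) + ((θ - Real.pi) / 2 : ℝ) * I := by
  obtain ⟨hθ₀, hθ₂π⟩ := hθ
  have hsin : 0 < Real.sin (θ / 2) := Real.sin_pos_of_pos_of_lt_pi (by linarith) (by linarith)
  have hpolar : 1 - exp (θ * I) =
      exp (Real.log (2 * Real.sin (θ / 2)) + ((θ - Real.pi) / 2 : ℝ) * I) := by
    have hhalf : exp (θ * I) = exp ((θ / 2 : ℂ) * I) * exp ((θ / 2 : ℂ) * I) := by
      rw [← exp_add]; ring_nf
    have hinv : exp (-(θ / 2 : ℂ) * I) * exp ((θ / 2 : ℂ) * I) = 1 := by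
      rw [← exp_add]; ring_nf; exact exp_zero
    rw [exp_add, ← ofReal_exp, Real.exp_log (by positivity)]
    push_cast
    rw [two_sin, show ((θ : ℂ) - Real.pi) / 2 * I = (θ / 2 : ℂ) * I + -(Real.pi / 2 * I) by ring,
      exp_add, exp_neg, exp_pi_div_two_mul_I, inv_I, hhalf]
    linear_combination (-1 : ℂ) * hinv +
      (exp (-(θ / 2 : ℂ) * I) * exp ((θ / 2 : ℂ) * I) - exp ((θ / 2 : ℂ) * I) ^ 2) * I_sq
  rw [hpolar, log_exp] <;> simp only [add_im, ofReal_im, mul_I_im, ofReal_re, zero_add] <;>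
    linarith [Real.pi_pos]

theorem log_one_sub_exp_neg_mul_I {θ : ℝ} (hθ : θ ∈ Set.Ioo 0 (2 * Real.pi)) :
    log (1 - exp (-θ * I)) = Real.log (2 * Real.sin (θ / 2)) - ((θ - Real.pi) / 2 : ℝ) * I := by
  have hθ' : 2 * Real.pi - θ ∈ Set.Ioo 0 (2 * Real.pi) := by
    obtain ⟨h₀, h₂π⟩ := hθ; constructor <;> linarith
  have hexp : exp (-θ * I) = exp ((2 * Real.pi - θ : ℝ) * I) := by
    rw [ofReal_sub, sub_mul, exp_sub, ofReal_mul, ofReal_ofNat, exp_two_pi_mul_I, neg_mul, exp_neg]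
    ring
  rw [hexp, log_one_sub_exp_mul_I hθ', show (2 * Real.pi - θ) / 2 = Real.pi - θ / 2 by ring,
    Real.sin_pi_sub]
  push_cast; ring

theorem log_neg_of_im_pos {w : ℂ} (hw : 0 < w.im) : log (-w) = log w - Real.pi * I := by
  rw [log, log, arg_neg_eq_arg_sub_pi_of_im_pos hw, norm_neg]
  push_cast; ring

/-- Region-III identity in the proof that the extended magnetic coordinate of the
Ooguri–Vafa space is continuous across the cut: for `Im w > 0` and `θ ∈ (0, 2π)`,
`(i/2π)[Log(w)Log(1-e^{iθ}) - Log(-w)Log(1-e^{-iθ})] + Log(1-e^{iθ})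
  = -((θ-π)/2π)Log(w) + (1/2)Log(1-e^{-iθ}) + i(θ-π)`. -/
theorem ov_region_III_identity (w : ℂ) (θ : ℝ) (hw : 0 < w.im)
    (hθ : θ ∈ Set.Ioo 0 (2 * Real.pi)) :
    (I / (2 * (Real.pi : ℂ))) *
        (Complex.log w * Complex.log (1 - Complex.exp ((θ : ℂ) * I)) -
          Complex.log (-w) * Complex.log (1 - Complex.exp (-(θ : ℂ) * I))) +
      Complex.log (1 - Complex.exp ((θ : ℂ) * I)) =
    -(((θ : ℂ) - (Real.pi : ℂ)) / (2 * (Real.pi : ℂ))) * Complex.log w +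
      (1 / 2) * Complex.log (1 - Complex.exp (-(θ : ℂ) * I)) +
      I * ((θ : ℂ) - (Real.pi : ℂ)) := by
  rw [log_one_sub_exp_mul_I hθ, log_one_sub_exp_neg_mul_I hθ, log_neg_of_im_pos hw]
  have hπ : (Real.pi : ℂ) ≠ 0 := ofReal_ne_zero.mpr Real.pi_ne_zero
  field_simp
  push_cast
  linear_combination (log w * θ - log w * Real.pi + Real.log (2 * Real.sin (θ / 2)) * Real.pi +
    I * (Real.pi ^ 2 - θ * Real.pi) / 2) * I_sq
end

section
/- Let θ ∈ (0, 2π), φ ∈ (−π, π], b = e^{iφ}, and let ζ ∈ ℂ satisfy Im ζ > 0 and Im(b/ζ) < 0. Then φ/(2π) − (i e^{iθ}/(2π(1 − e^{iθ})))·Log(b/ζ) − (i e^{−iθ}/(2π(1 − e^{−iθ})))·Log(−b/ζ) = −(i/2π)·Log ζ − 1/(2(1 − e^{iθ})). (This identity shows that the dθ_e-coefficient of d log X_m at the singular fiber of the Ooguri–Vafa space is independent of the phase φ = arg a.) -/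
/-!
Put `z = iφ - Log ζ`, so that `exp z = b/ζ` and `Im z = φ - arg ζ ∈ (-2π, π]`. Since
`Im (exp z) = e^{Re z} sin (Im z)`, the condition `Im (b/ζ) < 0` pins `Im z` into `(-π, 0)`, so
`Log (b/ζ) = z` and `Log (-b/ζ) = z + iπ` with no `2πi` corrections. After this substitution,
and `e^{-iθ}/(1 - e^{-iθ}) = -1/(1 - e^{iθ})`, the identity is a rational one in `e^{iθ}` in which
the `φ`-terms cancel.
-/

open Complex
open scoped Real

namespace Complex

lemma exp_ofReal_mul_I_ne_one {θ : ℝ} (hθ : θ ∈ Set.Ioo 0 (2 * π)) : exp (θ * I) ≠ 1 := by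
  intro h
  have hcos : Real.cos θ = 1 := by rw [← exp_ofReal_mul_I_re, h, one_re]
  rw [Real.cos_eq_one_iff_of_lt_of_lt (by linarith [hθ.1, Real.pi_pos]) hθ.2] at hcos
  exact hθ.1.ne' hcos

lemma im_mem_Ioo_of_exp_im_neg {z : ℂ} (hlo : -(2 * π) < z.im) (hhi : z.im ≤ π)
    (h : (exp z).im < 0) : z.im ∈ Set.Ioo (-π) 0 := by
  have hsin : Real.sin z.im < 0 := by
    rw [exp_im] at h
    exact neg_of_mul_neg_right h (Real.exp_pos _).le
  constructor
  · by_contra! hle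
    have := Real.sin_nonneg_of_nonneg_of_le_pi (x := z.im + 2 * π) (by linarith) (by linarith)
    rw [Real.sin_add_two_pi] at this
    linarith
  · by_contra! hge
    linarith [Real.sin_nonneg_of_nonneg_of_le_pi hge hhi]

lemma log_neg_exp {z : ℂ} (h : z.im ∈ Set.Ioo (-π) 0) : log (-exp z) = z + π * I := by
  rw [← exp_add_pi_mul_I, log_exp] <;> simp <;> linarith [h.1, h.2]

end Complex

lemma dtheta_coefficient_identity (p e L c : ℂ) (hp : p ≠ 0) (he0 : e ≠ 0) (he1 : e ≠ 1) :
    c / (2 * p) - I * e / (2 * p * (1 - e)) * (c * I - L)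
      - I * e⁻¹ / (2 * p * (1 - e⁻¹)) * (c * I - L + p * I)
      = -(I / (2 * p)) * L - 1 / (2 * (1 - e)) := by
  rw [inv_eq_one_div, one_sub_div he0]
  field_simp
  linear_combination (e * p - p - c * (1 - e) ^ 2) * I_sq

/-- The `dθ_e`-coefficient of `d log X_m` at the singular fiber of the Ooguri–Vafa space
is independent of the phase `φ = arg a`: for `θ ∈ (0, 2π)`, `φ ∈ (-π, π]`, `b = e^{iφ}`,
and `ζ` with `Im ζ > 0` and `Im(b/ζ) < 0`,
`φ/(2π) - (ie^{iθ}/(2π(1-e^{iθ})))Log(b/ζ) - (ie^{-iθ}/(2π(1-e^{-iθ})))Log(-b/ζ)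
  = -(i/2π)Log ζ - 1/(2(1-e^{iθ}))`. -/
theorem ov_dtheta_coefficient (θ φ : ℝ) (ζ : ℂ)
    (hθ : θ ∈ Set.Ioo 0 (2 * Real.pi)) (hφ : φ ∈ Set.Ioc (-Real.pi) Real.pi)
    (hζ : 0 < ζ.im) (hbζ : (Complex.exp ((φ : ℂ) * I) / ζ).im < 0) :
    ((φ : ℂ) / (2 * (Real.pi : ℂ))) -
      (I * Complex.exp ((θ : ℂ) * I) /
          (2 * (Real.pi : ℂ) * (1 - Complex.exp ((θ : ℂ) * I)))) *
        Complex.log (Complex.exp ((φ : ℂ) * I) / ζ) -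
      (I * Complex.exp (-(θ : ℂ) * I) /
          (2 * (Real.pi : ℂ) * (1 - Complex.exp (-(θ : ℂ) * I)))) *
        Complex.log (-Complex.exp ((φ : ℂ) * I) / ζ) =
    -(I / (2 * (Real.pi : ℂ))) * Complex.log ζ -
      1 / (2 * (1 - Complex.exp ((θ : ℂ) * I))) := by
  have hζ0 : ζ ≠ 0 := fun h ↦ by simp [h] at hζ
  set z : ℂ := φ * I - log ζ
  have hz : exp z = exp (φ * I) / ζ := by rw [exp_sub, exp_log hζ0]
  have hz_im : z.im = φ - arg ζ := by simp [z, log_im]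
  have harg_nonneg : 0 ≤ arg ζ := arg_nonneg_iff.2 hζ.le
  have harg_lt_pi : arg ζ < π := arg_lt_pi_iff.2 (Or.inr hζ.ne')
  have hz_mem : z.im ∈ Set.Ioo (-π) 0 :=
    im_mem_Ioo_of_exp_im_neg (by linarith [hφ.1]) (by linarith [hφ.2]) (hz ▸ hbζ)
  rw [neg_div, ← hz, log_neg_exp hz_mem, log_exp (by linarith [hz_mem.1]) (by linarith [hz_mem.2]),
    neg_mul, exp_neg]
  exact dtheta_coefficient_identity _ _ _ _ (ofReal_ne_zero.2 Real.pi_ne_zero) (exp_ne_zero _)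
    (exp_ofReal_mul_I_ne_one hθ)
end
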